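/- arXiv:0902.4823 — 2 statements merged into one kernel-verified Lean document; each statement's English description precedes it below -/
import Mathlib

section
/- Let p: E → B be a continuous map and n ≥ 0. Then the n-fold join *ⁿ_B E can be covered by n+1 open subsets U₀, …, Uₙ such that for each i there exists a continuous map σᵢ: Uᵢ → E with p ∘ σᵢ equal to the restriction of the n-th join map jⁿp to Uᵢ. -/
open unitInterval

universe u v w

/-- Homotopy lifting property of `p` with respect to the space `Y`. -/
def HasHLPWrt {E : Type u} {B : Type v} [TopologicalSpace E] [TopologicalSpace B]
    (p : E → B) (Y : Type w) [TopologicalSpace Y] : Prop :=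
  ∀ (H : Y × I → B) (h : Y → E), Continuous H → Continuous h →
    (∀ y, p (h y) = H (y, 0)) →
    ∃ H' : Y × I → E, Continuous H' ∧ (∀ z, p (H' z) = H z) ∧ ∀ y, H' (y, 0) = h y

/-- A Hurewicz fibration: a continuous map with the homotopy lifting property with
respect to all topological spaces. -/
def IsHurewiczFibration {E : Type u} {B : Type v} [TopologicalSpace E] [TopologicalSpace B]
    (p : E → B) : Prop :=
  Continuous p ∧ ∀ (Y : Type w) [TopologicalSpace Y], HasHLPWrt p Y

/-- `SecatLe p n` : the sectional category of `p` is at most `n`, i.e. the base can be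
covered by `n+1` open sets on each of which `p` admits a continuous local section. -/
def SecatLe {E : Type u} {B : Type v} [TopologicalSpace E] [TopologicalSpace B]
    (p : E → B) (n : ℕ) : Prop :=
  ∃ U : Fin (n + 1) → Set B, (∀ i, IsOpen (U i)) ∧ (∀ b, ∃ i, b ∈ U i) ∧
    ∀ i, ∃ s : U i → E, Continuous s ∧ ∀ x : U i, p (s x) = (x : B)

/-- The space underlying the double mapping cylinder construction of the fiber join. -/
def PreJoin {E : Type u} {E' : Type v} {B : Type w}
    (p : E → B) (p' : E' → B) : Type (max u v) :=
  ({z : E × E' // p z.1 = p' z.2} × I) ⊕ E ⊕ E'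

instance {E : Type u} {E' : Type v} {B : Type w} [TopologicalSpace E] [TopologicalSpace E']
    (p : E → B) (p' : E' → B) : TopologicalSpace (PreJoin p p') :=
  inferInstanceAs (TopologicalSpace (({z : E × E' // p z.1 = p' z.2} × I) ⊕ E ⊕ E'))

/-- The identifications defining the fiber join: `(e,e',0) ~ e` and `(e,e',1) ~ e'`. -/
inductive JoinRel {E : Type u} {E' : Type v} {B : Type w} (p : E → B) (p' : E' → B) :
    PreJoin p p' → PreJoin p p' → Prop
  | zero (z : {z : E × E' // p z.1 = p' z.2}) :
      JoinRel p p' (Sum.inl (z, 0)) (Sum.inr (Sum.inl z.1.1))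
  | one (z : {z : E × E' // p z.1 = p' z.2}) :
      JoinRel p p' (Sum.inl (z, 1)) (Sum.inr (Sum.inr z.1.2))

/-- The fiber join `E *_B E'` of two maps `p : E → B`, `p' : E' → B`. -/
def FiberJoin {E : Type u} {E' : Type v} {B : Type w} (p : E → B) (p' : E' → B) :
    Type (max u v) :=
  Quot (JoinRel p p')

instance {E : Type u} {E' : Type v} {B : Type w} [TopologicalSpace E] [TopologicalSpace E']
    (p : E → B) (p' : E' → B) : TopologicalSpace (FiberJoin p p') :=
  inferInstanceAs (TopologicalSpace (Quot (JoinRel p p')))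

/-- The join map `E *_B E' → B`. -/
def joinMap {E : Type u} {E' : Type v} {B : Type w} (p : E → B) (p' : E' → B) :
    FiberJoin p p' → B :=
  Quot.lift
    (fun z => match z with
      | Sum.inl (z, _) => p z.1.1
      | Sum.inr (Sum.inl e) => p e
      | Sum.inr (Sum.inr e') => p' e')
    (by rintro a b (⟨z⟩ | ⟨z⟩)
        · rfl
        · exact z.2)

/-- Iterated data for the `n`-fold fiber join: carrier, topology, and `n`-th join map. -/
def nJoinData {E : Type u} {B : Type v} [TopologicalSpace E] [TopologicalSpace B]
    (p : E → B) : ℕ → (T : Type u) ×' (_ : TopologicalSpace T) ×' (T → B)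
  | 0 => ⟨E, inferInstance, p⟩
  | n + 1 =>
      let prev := nJoinData p n
      letI : TopologicalSpace prev.1 := prev.2.1
      ⟨FiberJoin prev.2.2 p, inferInstance, joinMap prev.2.2 p⟩

/-- The `n`-fold fiber join `*ⁿ_B E`. -/
def nJoin {E : Type u} {B : Type v} [TopologicalSpace E] [TopologicalSpace B]
    (p : E → B) (n : ℕ) : Type u :=
  (nJoinData p n).1

instance {E : Type u} {B : Type v} [TopologicalSpace E] [TopologicalSpace B]
    (p : E → B) (n : ℕ) : TopologicalSpace (nJoin p n) :=
  (nJoinData p n).2.1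

/-- The `n`-th join map `jⁿp : *ⁿ_B E → B`. -/
def nJoinMap {E : Type u} {B : Type v} [TopologicalSpace E] [TopologicalSpace B]
    (p : E → B) (n : ℕ) : nJoin p n → B :=
  (nJoinData p n).2.2

/-!
Write `X = *ⁿ_B E`, so that `*ⁿ⁺¹_B E = X *_B E`. This join is the union of two open sets: the
points `[x, e, t]` with `t < 1` together with `X`, and those with `t > 0` together with `E`. On the
second, `[x, e, t] ↦ e` lifts the join map through `p`; on the first, `[x, e, t] ↦ x` lifts it
through `jⁿp`, so the `n + 1` open sets of a cover of `X` carrying lifts through `p` pull back to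
`n + 1` open sets carrying lifts of `jⁿ⁺¹p` through `p`. Adding the second set gives `n + 2`.
-/

open Set Topology

section

variable {α β γ : Type*} [TopologicalSpace α] [TopologicalSpace β] [TopologicalSpace γ]

theorem continuous_of_restrictPreimage_inl_inr {s : Set (α ⊕ β)} {f : s → γ}
    (hl : Continuous (f ∘ s.restrictPreimage Sum.inl))
    (hr : Continuous (f ∘ s.restrictPreimage Sum.inr)) : Continuous f := by
  set j := Sum.elim (s.restrictPreimage Sum.inl) (s.restrictPreimage Sum.inr)
  have hj : IsQuotientMap j := by
    refine IsOpenMap.isQuotientMap ?_ ?_ ?_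
    · exact (s.restrictPreimage_isOpenEmbedding .inl).isOpenMap.sumElim
        (s.restrictPreimage_isOpenEmbedding .inr).isOpenMap
    · exact (continuous_inl.restrictPreimage (s := s)).sumElim
        (continuous_inr.restrictPreimage (s := s))
    · rintro ⟨a | b, h⟩
      exacts [⟨.inl ⟨a, h⟩, rfl⟩, ⟨.inr ⟨b, h⟩, rfl⟩]
  rw [hj.continuous_iff, Sum.comp_elim]
  exact hl.sumElim hr

theorem Quot.exists_continuous_lift_of_isOpen {r : α → α → Prop} {s : Set (Quot r)}
    (hs : IsOpen s) {g : Quot.mk r ⁻¹' s → γ} (hg : Continuous g)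
    (hr : ∀ a b (ha : Quot.mk r a ∈ s) (hb : Quot.mk r b ∈ s), r a b → g ⟨a, ha⟩ = g ⟨b, hb⟩) :
    ∃ g' : s → γ, Continuous g' ∧ ∀ a, g' (s.restrictPreimage (Quot.mk r) a) = g a := by
  have hfac : Function.FactorsThrough g (s.restrictPreimage (Quot.mk r)) := by
    rintro ⟨a, ha⟩ ⟨b, hb⟩ hmk
    have hab : Relation.EqvGen r a b := Quot.eqvGen_exact (congrArg Subtype.val hmk)
    clear hmk
    induction hab with
    | rel a b h => exact hr a b ha hb h
    | refl => rfl
    | symm a b _ ih => exact (ih hb ha).symm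
    | trans a b c hab _ ih₁ ih₂ =>
      have hb' : Quot.mk r b ∈ s := Quot.eqvGen_sound hab ▸ ha
      exact (ih₁ ha hb').trans (ih₂ hb' hb)
  let π : C(Quot.mk r ⁻¹' s, s) := ⟨_, continuous_quot_mk.restrictPreimage⟩
  have hπ : IsQuotientMap π := isQuotientMap_quot_mk.restrictPreimage_isOpen hs
  exact ⟨hπ.lift ⟨g, hg⟩ hfac, (hπ.lift ⟨g, hg⟩ hfac).continuous,
    ContinuousMap.congr_fun (hπ.lift_comp ⟨g, hg⟩ hfac)⟩

end

section

variable {α X Y E B : Type*} [TopologicalSpace α] [TopologicalSpace X] [TopologicalSpace Y]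
  [TopologicalSpace E]

def LiftsOn (p : E → B) (f : Y → B) (U : Set Y) : Prop :=
  ∃ s : U → E, Continuous s ∧ ∀ y : U, p (s y) = f y

def HasLiftCover (p : E → B) (f : Y → B) (A : Set Y) (n : ℕ) : Prop :=
  ∃ U : Fin (n + 1) → Set Y, (∀ i, IsOpen (U i)) ∧ A ⊆ ⋃ i, U i ∧ ∀ i, LiftsOn p f (U i)

variable {p : E → B} {q : X → B} {f : Y → B}

theorem LiftsOn.comp {A : Set Y} {ℓ : A → X} (hℓ : Continuous ℓ) (hqℓ : ∀ a, q (ℓ a) = f a)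
    {U : Set X} (hU : LiftsOn p q U) : LiftsOn p f ((↑) '' (ℓ ⁻¹' U)) := by
  obtain ⟨s, hs, hps⟩ := hU
  let e := IsEmbedding.subtypeVal.homeomorphImage (ℓ ⁻¹' U)
  refine ⟨s ∘ U.restrictPreimage ℓ ∘ e.symm, hs.comp (hℓ.restrictPreimage.comp e.symm.continuous),
    fun y => ?_⟩
  have hy : ((e.symm y : A) : Y) = y := congrArg Subtype.val (e.apply_symm_apply y)
  simp only [Function.comp_apply, hps, restrictPreimage_coe, hqℓ, hy]

theorem HasLiftCover.of_liftsOn {A : Set Y} (hA : IsOpen A) (hf : LiftsOn q f A) {n : ℕ}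
    (h : HasLiftCover p q univ n) : HasLiftCover p f A n := by
  obtain ⟨ℓ, hℓ, hqℓ⟩ := hf
  obtain ⟨U, hUo, hUcov, hU⟩ := h
  refine ⟨fun i => (↑) '' (ℓ ⁻¹' U i), fun i => hA.isOpenMap_subtype_val _ ((hUo i).preimage hℓ),
    fun y hy => ?_, fun i => (hU i).comp hℓ hqℓ⟩
  obtain ⟨i, hi⟩ := mem_iUnion.mp (hUcov (mem_univ (ℓ ⟨y, hy⟩)))
  exact mem_iUnion.mpr ⟨i, ⟨y, hy⟩, hi, rfl⟩

theorem HasLiftCover.union_of_liftsOn {A A' : Set Y} {n : ℕ} (h : HasLiftCover p f A n)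
    (hA' : IsOpen A') (hf : LiftsOn p f A') : HasLiftCover p f (A' ∪ A) (n + 1) := by
  obtain ⟨U, hUo, hUcov, hU⟩ := h
  refine ⟨Fin.cons A' U, Fin.cases hA' hUo, ?_, Fin.cases hf hU⟩
  exact union_subset (subset_iUnion_of_subset 0 subset_rfl)
    (hUcov.trans (iUnion_subset fun i => subset_iUnion_of_subset i.succ subset_rfl))

theorem liftsOn_quot_of_isOpen {r : α → α → Prop} {s : Set (Quot r)} {f : Quot r → B}
    (hs : IsOpen s) {g : Quot.mk r ⁻¹' s → E} (hg : Continuous g)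
    (hr : ∀ a b (ha : Quot.mk r a ∈ s) (hb : Quot.mk r b ∈ s), r a b → g ⟨a, ha⟩ = g ⟨b, hb⟩)
    (hpg : ∀ a, p (g a) = f (Quot.mk r a)) : LiftsOn p f s := by
  obtain ⟨g', hg', hg'g⟩ := Quot.exists_continuous_lift_of_isOpen hs hg hr
  refine ⟨g', hg', fun z => ?_⟩
  obtain ⟨a, rfl⟩ := Quot.mk_surjective.restrictPreimage s z
  rw [hg'g, hpg]
  rfl

end

section

variable {X E B : Type*} (q : X → B) (p : E → B)

namespace PreJoin

def IsLeft : PreJoin q p → Prop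
  | .inl (_, t) => t < 1
  | .inr (.inl _) => True
  | .inr (.inr _) => False

def IsRight : PreJoin q p → Prop
  | .inl (_, t) => 0 < t
  | .inr (.inl _) => False
  | .inr (.inr _) => True

def leftProj : {w : PreJoin q p | IsLeft q p w} → X
  | ⟨.inl (z, _), _⟩ => z.1.1
  | ⟨.inr (.inl x), _⟩ => x
  | ⟨.inr (.inr _), h⟩ => h.elim

def rightProj : {w : PreJoin q p | IsRight q p w} → E
  | ⟨.inl (z, _), _⟩ => z.1.2
  | ⟨.inr (.inl _), h⟩ => h.elim
  | ⟨.inr (.inr e), _⟩ => e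

end PreJoin

namespace FiberJoin

def leftPart : Set (FiberJoin q p) :=
  {z | Quot.lift (PreJoin.IsLeft q p) (by rintro _ _ (_ | _) <;> simp [PreJoin.IsLeft]) z}

def rightPart : Set (FiberJoin q p) :=
  {z | Quot.lift (PreJoin.IsRight q p) (by rintro _ _ (_ | _) <;> simp [PreJoin.IsRight]) z}

theorem rightPart_union_leftPart : rightPart q p ∪ leftPart q p = univ := by
  refine eq_univ_of_forall (Quot.ind ?_)
  rintro (⟨z, t⟩ | x | e)
  · exact (lt_or_ge 0 t).imp id fun ht => ht.trans_lt zero_lt_one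
  · exact Or.inr trivial
  · exact Or.inl trivial

end FiberJoin

variable [TopologicalSpace X] [TopologicalSpace E]

namespace PreJoin

theorem isOpen_setOf_isLeft : IsOpen {w : PreJoin q p | IsLeft q p w} :=
  isOpen_sum_iff.mpr ⟨isOpen_lt continuous_snd continuous_const,
    isOpen_sum_iff.mpr ⟨isOpen_univ, isOpen_empty⟩⟩

theorem isOpen_setOf_isRight : IsOpen {w : PreJoin q p | IsRight q p w} :=
  isOpen_sum_iff.mpr ⟨isOpen_lt continuous_const continuous_snd,
    isOpen_sum_iff.mpr ⟨isOpen_empty, isOpen_univ⟩⟩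

theorem continuous_leftProj : Continuous (leftProj q p) :=
  continuous_of_restrictPreimage_inl_inr continuous_subtype_val.fst.subtype_val.fst
    (continuous_of_restrictPreimage_inl_inr continuous_subtype_val
      (continuous_of_const fun e _ => False.elim e.2))

theorem continuous_rightProj : Continuous (rightProj q p) :=
  continuous_of_restrictPreimage_inl_inr continuous_subtype_val.fst.subtype_val.snd
    (continuous_of_restrictPreimage_inl_inr (continuous_of_const fun x _ => False.elim x.2)
      continuous_subtype_val)

end PreJoin

namespace FiberJoin

theorem isOpen_leftPart : IsOpen (leftPart q p) :=
  isQuotientMap_quot_mk.isOpen_preimage.mp (PreJoin.isOpen_setOf_isLeft q p)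

theorem isOpen_rightPart : IsOpen (rightPart q p) :=
  isQuotientMap_quot_mk.isOpen_preimage.mp (PreJoin.isOpen_setOf_isRight q p)

theorem liftsOn_leftPart : LiftsOn q (joinMap q p) (leftPart q p) := by
  refine liftsOn_quot_of_isOpen (isOpen_leftPart q p) (PreJoin.continuous_leftProj q p) ?_ ?_
  · rintro _ _ ha _ (_ | _)
    exacts [rfl, (lt_irrefl (1 : I) ha).elim]
  · rintro ⟨⟨z, t⟩ | x | e, h⟩
    exacts [rfl, rfl, h.elim]

theorem liftsOn_rightPart : LiftsOn p (joinMap q p) (rightPart q p) := by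
  refine liftsOn_quot_of_isOpen (isOpen_rightPart q p) (PreJoin.continuous_rightProj q p) ?_ ?_
  · rintro _ _ ha _ (_ | _)
    exacts [(lt_irrefl (0 : I) ha).elim, rfl]
  · rintro ⟨⟨z, t⟩ | x | e, h⟩
    exacts [z.2.symm, h.elim, rfl]

end FiberJoin

open FiberJoin in
theorem HasLiftCover.joinMap {q : X → B} {p : E → B} {n : ℕ} (h : HasLiftCover p q univ n) :
    HasLiftCover p (joinMap q p) univ (n + 1) := by
  rw [← rightPart_union_leftPart]
  exact (h.of_liftsOn (isOpen_leftPart q p) (liftsOn_leftPart q p)).union_of_liftsOn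
    (isOpen_rightPart q p) (liftsOn_rightPart q p)

end

theorem hasLiftCover_nJoinMap {E : Type u} {B : Type v} [TopologicalSpace E] [TopologicalSpace B]
    (p : E → B) (n : ℕ) : HasLiftCover p (nJoinMap p n) univ n := by
  induction n with
  | zero =>
    exact ⟨fun _ => univ, fun _ => isOpen_univ, subset_iUnion_of_subset 0 subset_rfl,
      fun _ => ⟨Subtype.val, continuous_subtype_val, fun _ => rfl⟩⟩
  | succ n ih => exact ih.joinMap

theorem nJoin_cover_factor_general {E : Type u} {B : Type v}
    [TopologicalSpace E] [TopologicalSpace B]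
    (p : E → B) (n : ℕ) :
    ∃ U : Fin (n + 1) → Set (nJoin p n),
      (∀ i, IsOpen (U i)) ∧ (∀ z, ∃ i, z ∈ U i) ∧
      ∀ i, ∃ sec : U i → E, Continuous sec ∧
        ∀ z : U i, p (sec z) = nJoinMap p n (z : nJoin p n) := by
  obtain ⟨U, hUo, hUcov, hU⟩ := hasLiftCover_nJoinMap p n
  exact ⟨U, hUo, fun z => mem_iUnion.mp (hUcov (mem_univ z)), hU⟩

/-- For a continuous map `p : E → B` and `n ≥ 0`, the `n`-fold join
`*ⁿ_B E` can be covered by `n+1` open sets `U i`, on each of which the restriction of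
the `n`-th join map factors continuously through `p`. -/
theorem nJoin_cover_factor {E : Type u} {B : Type v}
    [TopologicalSpace E] [TopologicalSpace B]
    (p : E → B) (hp : Continuous p) (n : ℕ) :
    ∃ U : Fin (n + 1) → Set (nJoin p n),
      (∀ i, IsOpen (U i)) ∧ (∀ z, ∃ i, z ∈ U i) ∧
      ∀ i, ∃ sec : U i → E, Continuous sec ∧
        ∀ z : U i, p (sec z) = nJoinMap p n (z : nJoin p n) :=
  nJoin_cover_factor_general p n
end

section
/- Let B be a normal topological space, let p: E → B and p': E' → B be continuous maps, let U, U' ⊆ B be open sets on which p, respectively p', admit continuous local sections, and let C ⊆ U and C' ⊆ U' be closed subsets of B. Then there exists an open set W ⊆ B with C ∪ C' ⊆ W on which the join map j_{p,p'}: E *_B E' → B admits a continuous local section. -/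
open unitInterval

universe u v w

/-!
On `U ∩ U'` both sections exist, so for any continuous `g : B → I` the formula
`x ↦ [s x, s' x, g x]` is a section of the join map there; it coincides with `x ↦ [s x]` where
`g = 0` and with `x ↦ [s' x]` where `g = 1`. Normality provides a Urysohn function `g` that
vanishes on a neighbourhood `V` of `C \ U'` and equals `1` on a neighbourhood `V'` of `C' \ U`,
and then the three local sections glue to a section over
`(U ∩ U') ∪ (U ∩ V) ∪ (U' ∩ V') ⊇ C ∪ C'`.
-/

open Set

section Gluing

variable {X Y : Type*} {O₁ O₂ : Set X}

open Classical in
noncomputable def glueUnion (f₁ : O₁ → Y) (f₂ : O₂ → Y) : ↥(O₁ ∪ O₂) → Y := fun x =>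
  if h : (x : X) ∈ O₁ then f₁ ⟨x, h⟩ else f₂ ⟨x, x.2.resolve_left h⟩

theorem glueUnion_of_mem_left (f₁ : O₁ → Y) (f₂ : O₂ → Y) {x : X} (hx : x ∈ O₁) :
    glueUnion f₁ f₂ ⟨x, Or.inl hx⟩ = f₁ ⟨x, hx⟩ :=
  dif_pos hx

theorem glueUnion_of_mem_right {f₁ : O₁ → Y} {f₂ : O₂ → Y}
    (hagree : ∀ x (hx₁ : x ∈ O₁) (hx₂ : x ∈ O₂), f₁ ⟨x, hx₁⟩ = f₂ ⟨x, hx₂⟩)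
    {x : X} (hx : x ∈ O₂) : glueUnion f₁ f₂ ⟨x, Or.inr hx⟩ = f₂ ⟨x, hx⟩ := by
  unfold glueUnion
  split_ifs with h
  exacts [hagree x h hx, rfl]

theorem continuous_glueUnion [TopologicalSpace X] [TopologicalSpace Y] (h₁ : IsOpen O₁)
    (h₂ : IsOpen O₂) {f₁ : O₁ → Y} {f₂ : O₂ → Y} (hf₁ : Continuous f₁) (hf₂ : Continuous f₂)
    (hagree : ∀ x (hx₁ : x ∈ O₁) (hx₂ : x ∈ O₂), f₁ ⟨x, hx₁⟩ = f₂ ⟨x, hx₂⟩) :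
    Continuous (glueUnion f₁ f₂) := by
  have hon₁ : ContinuousOn (glueUnion f₁ f₂) (Subtype.val ⁻¹' O₁) := by
    rw [continuousOn_iff_continuous_domRestrict]
    have : (Subtype.val ⁻¹' O₁).domRestrict (glueUnion f₁ f₂) = fun y => f₁ ⟨y.1, y.2⟩ :=
      funext fun y => glueUnion_of_mem_left f₁ f₂ y.2
    rw [this]
    fun_prop
  have hon₂ : ContinuousOn (glueUnion f₁ f₂) (Subtype.val ⁻¹' O₂) := by
    rw [continuousOn_iff_continuous_domRestrict]
    have : (Subtype.val ⁻¹' O₂).domRestrict (glueUnion f₁ f₂) = fun y => f₂ ⟨y.1, y.2⟩ :=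
      funext fun y => glueUnion_of_mem_right hagree y.2
    rw [this]
    fun_prop
  refine continuous_iff_continuousAt.2 fun x => x.2.elim (fun hx => ?_) (fun hx => ?_)
  · exact hon₁.continuousAt ((h₁.preimage continuous_subtype_val).mem_nhds hx)
  · exact hon₂.continuousAt ((h₂.preimage continuous_subtype_val).mem_nhds hx)

theorem glueUnion_isSection {q : Y → X} {f₁ : O₁ → Y} {f₂ : O₂ → Y}
    (hq₁ : ∀ x, q (f₁ x) = x) (hq₂ : ∀ x, q (f₂ x) = x) (x : ↥(O₁ ∪ O₂)) :
    q (glueUnion f₁ f₂ x) = x := by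
  unfold glueUnion
  split_ifs
  exacts [hq₁ _, hq₂ _]

end Gluing

theorem exists_continuous_unitInterval_eqOn_zero_one {X : Type*} [TopologicalSpace X]
    [NormalSpace X] {A A' : Set X} (hA : IsClosed A) (hA' : IsClosed A') (hd : Disjoint A A') :
    ∃ V V' : Set X, IsOpen V ∧ IsOpen V' ∧ A ⊆ V ∧ A' ⊆ V' ∧
      ∃ g : X → I, Continuous g ∧ EqOn g 0 V ∧ EqOn g 1 V' := by
  obtain ⟨O, O', hO, hO', hAO, hA'O', hOO'⟩ := normal_separation hA hA' hd
  obtain ⟨V, hV, hAV, hVO⟩ := normal_exists_closure_subset hA hO hAO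
  -- Urysohn between `closure V` and `Oᶜ ⊇ O'`
  obtain ⟨f, hf0, hf1, hf01⟩ := exists_continuous_zero_one_of_isClosed isClosed_closure
    hO.isClosed_compl (disjoint_compl_right.mono_left hVO)
  refine ⟨V, O', hV, hO', hAV, hA'O', fun x => ⟨f x, hf01 x⟩, by fun_prop,
    fun x hx => Subtype.ext (hf0 (subset_closure hx)), fun x hx => Subtype.ext (hf1 ?_)⟩
  exact hOO'.subset_compl_left hx

namespace FiberJoin

variable {E : Type u} {E' : Type v} {B : Type w} {p : E → B} {p' : E' → B}

-- `mk z t`, `left e` and `right e'` are the classes `[e, e', t]`, `[e]` and `[e']`.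
def mk (z : {z : E × E' // p z.1 = p' z.2}) (t : I) : FiberJoin p p' :=
  Quot.mk _ (Sum.inl (z, t))

def left (e : E) : FiberJoin p p' :=
  Quot.mk _ (Sum.inr (Sum.inl e))

def right (e' : E') : FiberJoin p p' :=
  Quot.mk _ (Sum.inr (Sum.inr e'))

theorem mk_zero (z : {z : E × E' // p z.1 = p' z.2}) : mk z 0 = left z.1.1 :=
  Quot.sound (JoinRel.zero z)

theorem mk_one (z : {z : E × E' // p z.1 = p' z.2}) : mk z 1 = right z.1.2 :=
  Quot.sound (JoinRel.one z)

variable [TopologicalSpace E] [TopologicalSpace E']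

@[fun_prop]
theorem continuous_mk : Continuous fun q : {z : E × E' // p z.1 = p' z.2} × I => mk q.1 q.2 :=
  continuous_quot_mk.comp continuous_inl

@[fun_prop]
theorem continuous_left : Continuous (left : E → FiberJoin p p') :=
  continuous_quot_mk.comp (continuous_inr.comp continuous_inl)

@[fun_prop]
theorem continuous_right : Continuous (right : E' → FiberJoin p p') :=
  continuous_quot_mk.comp (continuous_inr.comp continuous_inr)

variable [TopologicalSpace B]

theorem exists_joinMap_section_of_eqOn_zero_one {U U' V V' : Set B} (hU : IsOpen U)
    (hU' : IsOpen U') (hV : IsOpen V) (hV' : IsOpen V')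
    {s : U → E} (hs : Continuous s) (hsec : ∀ x : U, p (s x) = x)
    {s' : U' → E'} (hs' : Continuous s') (hsec' : ∀ x : U', p' (s' x) = x)
    {g : B → I} (hg : Continuous g) (hgV : EqOn g 0 V) (hgV' : EqOn g 1 V') :
    ∃ t : ↥((U ∩ U') ∪ (U ∩ V) ∪ (U' ∩ V')) → FiberJoin p p', Continuous t ∧
      ∀ x, joinMap p p' (t x) = x := by
  let onLeft : ↥(U ∩ V) → FiberJoin p p' := fun x => left (s ⟨x, x.2.1⟩)
  let onRight : ↥(U' ∩ V') → FiberJoin p p' := fun x => right (s' ⟨x, x.2.1⟩)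
  let onBoth : ↥(U ∩ U') → FiberJoin p p' := fun x =>
    mk ⟨(s ⟨x, x.2.1⟩, s' ⟨x, x.2.2⟩), (hsec _).trans (hsec' ⟨x, x.2.2⟩).symm⟩ (g x)
  have hBothLeft : ∀ x (hx₁ : x ∈ U ∩ U') (hx₂ : x ∈ U ∩ V),
      onBoth ⟨x, hx₁⟩ = onLeft ⟨x, hx₂⟩ := by
    intro x hx₁ hx₂
    simp only [onBoth, onLeft, hgV hx₂.2, Pi.zero_apply, mk_zero]
  have hBothRight : ∀ x (hx₁ : x ∈ U ∩ U') (hx₂ : x ∈ U' ∩ V'),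
      onBoth ⟨x, hx₁⟩ = onRight ⟨x, hx₂⟩ := by
    intro x hx₁ hx₂
    simp only [onBoth, onRight, hgV' hx₂.2, Pi.one_apply, mk_one]
  have hLeftRight : ∀ x (hx₁ : x ∈ (U ∩ U') ∪ (U ∩ V)) (hx₂ : x ∈ U' ∩ V'),
      glueUnion onBoth onLeft ⟨x, hx₁⟩ = onRight ⟨x, hx₂⟩ := fun x hx₁ hx₂ =>
    have hx : x ∈ U ∩ U' := ⟨hx₁.elim (·.1) (·.1), hx₂.1⟩
    (glueUnion_of_mem_left onBoth onLeft hx).trans (hBothRight x hx hx₂)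
  refine ⟨glueUnion (glueUnion onBoth onLeft) onRight, ?_, ?_⟩
  · exact continuous_glueUnion ((hU.inter hU').union (hU.inter hV)) (hU'.inter hV')
      (continuous_glueUnion (hU.inter hU') (hU.inter hV) (by fun_prop) (by fun_prop) hBothLeft)
      (by fun_prop) hLeftRight
  · exact glueUnion_isSection (glueUnion_isSection (fun x => hsec _) (fun x => hsec _))
      (fun x => hsec' _)

end FiberJoin

theorem joinMap_section_of_closed_subsets_general {E : Type u} {E' : Type v} {B : Type w}
    [TopologicalSpace E] [TopologicalSpace E'] [TopologicalSpace B] [NormalSpace B]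
    (p : E → B) (p' : E' → B)
    (U U' : Set B) (hU : IsOpen U) (hU' : IsOpen U')
    (s : U → E) (hs : Continuous s) (hsec : ∀ x : U, p (s x) = (x : B))
    (s' : U' → E') (hs' : Continuous s') (hsec' : ∀ x : U', p' (s' x) = (x : B))
    (C C' : Set B) (hC : IsClosed C) (hC' : IsClosed C')
    (hCU : C ⊆ U) (hC'U' : C' ⊆ U') :
    ∃ W : Set B, IsOpen W ∧ C ∪ C' ⊆ W ∧
      ∃ t : W → FiberJoin p p', Continuous t ∧
        ∀ x : W, joinMap p p' (t x) = (x : B) := by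
  have hdisj : Disjoint (C \ U') (C' \ U) :=
    disjoint_left.2 fun x hx hx' => hx'.2 (hCU hx.1)
  obtain ⟨V, V', hV, hV', hCV, hC'V', g, hg, hgV, hgV'⟩ :=
    exists_continuous_unitInterval_eqOn_zero_one (hC.sdiff hU') (hC'.sdiff hU) hdisj
  refine ⟨_, ((hU.inter hU').union (hU.inter hV)).union (hU'.inter hV'), ?_,
    FiberJoin.exists_joinMap_section_of_eqOn_zero_one hU hU' hV hV' hs hsec hs' hsec' hg hgV hgV'⟩
  rintro x (hx | hx)
  · by_cases hxU' : x ∈ U'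
    · exact Or.inl (Or.inl ⟨hCU hx, hxU'⟩)
    · exact Or.inl (Or.inr ⟨hCU hx, hCV ⟨hx, hxU'⟩⟩)
  · by_cases hxU : x ∈ U
    · exact Or.inl (Or.inl ⟨hxU, hC'U' hx⟩)
    · exact Or.inr ⟨hC'U' hx, hC'V' ⟨hx, hxU⟩⟩

/-- Over a normal base, local sections of `p` on `U ⊇ C` (closed) and
of `p'` on `U' ⊇ C'` (closed) can be combined to a local section of the join map
on an open set containing `C ∪ C'`. -/
theorem joinMap_section_of_closed_subsets {E : Type u} {E' : Type v} {B : Type w}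
    [TopologicalSpace E] [TopologicalSpace E'] [TopologicalSpace B] [NormalSpace B]
    (p : E → B) (p' : E' → B) (hp : Continuous p) (hp' : Continuous p')
    (U U' : Set B) (hU : IsOpen U) (hU' : IsOpen U')
    (s : U → E) (hs : Continuous s) (hsec : ∀ x : U, p (s x) = (x : B))
    (s' : U' → E') (hs' : Continuous s') (hsec' : ∀ x : U', p' (s' x) = (x : B))
    (C C' : Set B) (hC : IsClosed C) (hC' : IsClosed C')
    (hCU : C ⊆ U) (hC'U' : C' ⊆ U') :
    ∃ W : Set B, IsOpen W ∧ C ∪ C' ⊆ W ∧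
      ∃ t : W → FiberJoin p p', Continuous t ∧
        ∀ x : W, joinMap p p' (t x) = (x : B) :=
  joinMap_section_of_closed_subsets_general p p' U U' hU hU' s hs hsec s' hs' hsec' C C' hC hC' hCU
    hC'U'
end
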